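/- arXiv:0905.4048 — 3 statements merged into one kernel-verified Lean document; each statement's English description precedes it below -/
import Mathlib

section
/- Let q ∈ R be nonzero and suppose that every ideal J of R with card(R/J) = card(R/qR) equals qR (i.e., qR is the unique ideal of its index, so there is exactly one ideal colouring of R with ℓ = card(R/qR) colours). Then conj(q) ∈ qR, and hence the colouring induced by qR is perfect. -/
open Complex

/-- The primitive `n`-th root of unity `ζ = exp(2πi/n)`. -/
noncomputable def zeta (n : ℕ) : ℂ := Complex.exp (2 * Real.pi * Complex.I / n)

/-- The ring of cyclotomic integers `M_n = ℤ[ζ_n]`, as a subring of `ℂ`. -/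
noncomputable def Rn (n : ℕ) : Subring ℂ := Subring.closure {zeta n}

/-- `ζ_n` as an element of `M_n`. -/
noncomputable def zetaR (n : ℕ) : ↥(Rn n) := ⟨zeta n, Subring.subset_closure rfl⟩

/-- `z ∈ ℂ` lies in the ideal `I` of `Rn n` (viewed inside `ℂ`). -/
def InIdeal (n : ℕ) (I : Ideal ↥(Rn n)) (z : ℂ) : Prop :=
  ∃ w : ↥(Rn n), w ∈ I ∧ (w : ℂ) = z

/-- An isometry of the complex plane: `z ↦ a z + b` or `z ↦ a conj z + b` with `|a| = 1`. -/
def IsIsometry (g : ℂ → ℂ) : Prop :=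
  ∃ a b : ℂ, ‖a‖ = 1 ∧
    ((∀ z, g z = a * z + b) ∨ (∀ z, g z = a * (starRingEnd ℂ) z + b))

/-- An orientation-preserving isometry of the complex plane: `z ↦ a z + b` with `|a| = 1`. -/
def IsOPIsometry (g : ℂ → ℂ) : Prop :=
  ∃ a b : ℂ, ‖a‖ = 1 ∧ ∀ z, g z = a * z + b

/-- `g` is a colour symmetry of the colouring of `Rn n` induced by the ideal `I`. -/
def IsColourSym (n : ℕ) (I : Ideal ↥(Rn n)) (g : ℂ → ℂ) : Prop :=
  ∀ x y : ℂ, x ∈ Rn n → y ∈ Rn n → (InIdeal n I (x - y) ↔ InIdeal n I (g x - g y))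

/-- The colouring induced by `I` is perfect. -/
def IsPerfectColouring (n : ℕ) (I : Ideal ↥(Rn n)) : Prop :=
  ∀ g : ℂ → ℂ, IsIsometry g → g '' (Rn n : Set ℂ) = (Rn n : Set ℂ) → IsColourSym n I g

/-- The colouring induced by `I` is chirally perfect. -/
def IsChirallyPerfectColouring (n : ℕ) (I : Ideal ↥(Rn n)) : Prop :=
  ∀ g : ℂ → ℂ, IsOPIsometry g → g '' (Rn n : Set ℂ) = (Rn n : Set ℂ) → IsColourSym n I g

open ComplexConjugate

/-!
Complex conjugation restricts to a ring automorphism of `R`, and a ring automorphism maps every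
ideal to an ideal of the same index; so an ideal that is the only one of its index is stable under
conjugation, which gives `conj q ∈ qR`. Every isometry `g` with `g(R) = R` has the form
`z ↦ u z + b` or `z ↦ u conj(z) + b` with `b = g 0 ∈ R` and `u = g 1 - g 0` a unit of `R`
(its inverse is `conj u`), and both multiplication by a unit and a conjugation-stable ideal
preserve the relation `x - y ∈ I`.
-/

theorem Ideal.map_ringEquiv_eq_self_of_unique_card_quotient {R : Type*} [CommRing R]
    (σ : R ≃+* R) {I : Ideal R}
    (huniq : ∀ J : Ideal R, Cardinal.mk (R ⧸ J) = Cardinal.mk (R ⧸ I) → J = I) :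
    I.map σ = I :=
  huniq _ (Cardinal.mk_congr (Ideal.quotientEquiv I _ σ rfl).toEquiv).symm

section Cyclotomic

variable {n : ℕ}

lemma zeta_mem_Rn (n : ℕ) : zeta n ∈ Rn n := Subring.subset_closure rfl

lemma conj_zeta (n : ℕ) : conj (zeta n) = zeta n ^ (n - 1) := by
  rcases Nat.eq_zero_or_pos n with rfl | hn
  · -- `zeta 0 = exp (x / 0) = 1`, and `0 - 1 = 0` in `ℕ`
    simp [zeta]
  have hroot : IsPrimitiveRoot (zeta n) n := Complex.isPrimitiveRoot_exp n hn.ne'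
  have hconj : conj (zeta n) = (zeta n)⁻¹ := by
    rw [zeta, ← Complex.exp_conj, ← Complex.exp_neg]
    congr 1
    simp only [map_div₀, map_mul, Complex.conj_I, Complex.conj_ofReal, map_ofNat, map_natCast]
    ring
  rw [hconj, pow_sub₀ _ (hroot.ne_zero hn.ne') hn, hroot.pow_eq_one, pow_one, one_mul]

lemma conj_mem_Rn {z : ℂ} (hz : z ∈ Rn n) : conj z ∈ Rn n :=
  (Subring.closure_le (t := (Rn n).comap (starRingEnd ℂ))).mpr
    (Set.singleton_subset_iff.mpr (by simpa [conj_zeta] using pow_mem (zeta_mem_Rn n) (n - 1))) hz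

noncomputable def conjRn (n : ℕ) : Rn n ≃+* Rn n where
  toFun x := ⟨conj (x : ℂ), conj_mem_Rn x.2⟩
  invFun x := ⟨conj (x : ℂ), conj_mem_Rn x.2⟩
  left_inv _ := Subtype.ext (Complex.conj_conj _)
  right_inv _ := Subtype.ext (Complex.conj_conj _)
  map_mul' _ _ := Subtype.ext (map_mul _ _ _)
  map_add' _ _ := Subtype.ext (map_add _ _ _)

lemma exists_unit_of_isIsometry {g : ℂ → ℂ} (hg : IsIsometry g)
    (h0 : g 0 ∈ Rn n) (h1 : g 1 ∈ Rn n) :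
    ∃ u : (Rn n)ˣ, (∀ x y, g x - g y = u * (x - y)) ∨ (∀ x y, g x - g y = u * conj (x - y)) := by
  obtain ⟨a, b, ha, hab⟩ := hg
  have hdiff : g 1 - g 0 = a := by rcases hab with h | h <;> simp [h]
  have ha_mem : a ∈ Rn n := hdiff ▸ sub_mem h1 h0
  have ha_inv : (⟨a, ha_mem⟩ : Rn n) * ⟨conj a, conj_mem_Rn ha_mem⟩ = 1 :=
    Subtype.ext (by simp [Complex.mul_conj', ha])
  refine ⟨Units.mkOfMulEqOne _ _ ha_inv, ?_⟩
  rcases hab with h | h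
  · exact Or.inl fun x y => by rw [h, h, Units.val_mkOfMulEqOne]; ring
  · exact Or.inr fun x y => by rw [h, h, Units.val_mkOfMulEqOne, map_sub]; ring

variable {I : Ideal (Rn n)}

lemma InIdeal.mul (a : Rn n) {z : ℂ} (hz : InIdeal n I z) : InIdeal n I (a * z) := by
  obtain ⟨w, hw, rfl⟩ := hz
  exact ⟨a * w, I.mul_mem_left a hw, rfl⟩

lemma inIdeal_unit_mul_iff (u : (Rn n)ˣ) (z : ℂ) :
    InIdeal n I ((u : Rn n) * z) ↔ InIdeal n I z := by
  refine ⟨fun h => ?_, InIdeal.mul _⟩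
  have hinv : ((u⁻¹ : (Rn n)ˣ) : ℂ) * ((u : Rn n) * z) = z := by
    rw [← mul_assoc, ← Subring.coe_mul, Units.inv_mul, Subring.coe_one, one_mul]
  exact hinv ▸ h.mul _

lemma InIdeal.conj (hI : ∀ w ∈ I, conjRn n w ∈ I) {z : ℂ} (hz : InIdeal n I z) :
    InIdeal n I (conj z) := by
  obtain ⟨w, hw, rfl⟩ := hz
  exact ⟨conjRn n w, hI w hw, rfl⟩

lemma inIdeal_conj_iff (hI : ∀ w ∈ I, conjRn n w ∈ I) (z : ℂ) :
    InIdeal n I (conj z) ↔ InIdeal n I z :=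
  ⟨fun h => Complex.conj_conj z ▸ h.conj hI, InIdeal.conj hI⟩

lemma isPerfectColouring_of_conjRn_mem (hI : ∀ w ∈ I, conjRn n w ∈ I) :
    IsPerfectColouring n I := by
  intro g hg himg x y _ _
  have hmaps : ∀ z ∈ Rn n, g z ∈ Rn n := fun z hz => himg.subset (Set.mem_image_of_mem g hz)
  obtain ⟨u, hu | hu⟩ :=
    exists_unit_of_isIsometry hg (hmaps 0 (zero_mem _)) (hmaps 1 (one_mem _))
  · rw [hu, inIdeal_unit_mul_iff]
  · rw [hu, inIdeal_unit_mul_iff, inIdeal_conj_iff hI]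

end Cyclotomic

theorem stmt5_general (n : ℕ) (q : ↥(Rn n))
    (huniq : ∀ J : Ideal ↥(Rn n),
      Cardinal.mk (↥(Rn n) ⧸ J) = Cardinal.mk (↥(Rn n) ⧸ Ideal.span {q}) →
        J = Ideal.span {q}) :
    InIdeal n (Ideal.span {q}) ((starRingEnd ℂ) (q : ℂ)) ∧
    IsPerfectColouring n (Ideal.span {q}) := by
  have hstable : ∀ w ∈ Ideal.span {q}, conjRn n w ∈ Ideal.span {q} := fun w hw =>
    Ideal.map_ringEquiv_eq_self_of_unique_card_quotient (conjRn n) huniq ▸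
      Ideal.mem_map_of_mem _ hw
  exact ⟨⟨conjRn n q, hstable q (Ideal.mem_span_singleton_self q), rfl⟩,
    isPerfectColouring_of_conjRn_mem hstable⟩

/-- if `qR` is the unique ideal of its index, then `conj q ∈ qR` and the
colouring induced by `qR` is perfect. -/
theorem stmt5 (n : ℕ) (hn : 3 ≤ n) (hn2 : n % 4 ≠ 2) (q : ↥(Rn n)) (hq : q ≠ 0)
    (huniq : ∀ J : Ideal ↥(Rn n),
      Cardinal.mk (↥(Rn n) ⧸ J) = Cardinal.mk (↥(Rn n) ⧸ Ideal.span {q}) →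
        J = Ideal.span {q}) :
    InIdeal n (Ideal.span {q}) ((starRingEnd ℂ) (q : ℂ)) ∧
    IsPerfectColouring n (Ideal.span {q}) :=
  stmt5_general n q huniq
end

section
/- Let N = n if n is even and N = 2n if n is odd. Let I be an ideal of R such that ℓ = card(R/I) is finite and ℓ > N. Let H be the group (under composition) of all colour symmetries of the colouring induced by I, and let K be the colour preserving group (a normal subgroup of H). Then there is no group homomorphism s : H/K → H such that the canonical projection H → H/K composed with s is the identity on H/K; i.e., H is not a semidirect product K ⋊ H/K. -/
open Complex

/-!
A splitting `s` would embed `R/I` into `H`: composing `s` with the translations `z ↦ z + w`,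
`w ∈ R`, gives a homomorphism whose kernel is exactly `I`, because a translation preserves colours
iff `w ∈ I`. So `H` would contain an abelian group of `ℓ` isometries. In a finite group of
isometries every translation is trivial, so an element is determined by its linear part. If all
elements preserve orientation, their linear parts are roots of unity lying in `ℤ[ζ]`, hence `N`-th
roots of unity, and `ℓ ≤ N`. If one of them reverses orientation, every orientation-preserving
element commutes with it and is therefore trivial or a half-turn; two half-turns differ by a
translation, so there is at most one, and `ℓ ≤ 4 ≤ N`.
-/

def cyclotomicTorsionOrder (n : ℕ) : ℕ := if n % 2 = 0 then n else 2 * n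

open Polynomial IntermediateField in
theorem totient_le_of_isPrimitiveRoot_mem_adjoin {L : Type*} [Field L] [CharZero L] {ζ μ : L}
    {n m : ℕ} (hn : 0 < n) (hm : 0 < m) (hζ : IsPrimitiveRoot ζ n) (hμ : IsPrimitiveRoot μ m)
    (hμζ : μ ∈ ℚ⟮ζ⟯) : m.totient ≤ n.totient := by
  have hint : IsIntegral ℚ ζ := (hζ.isIntegral hn).tower_top
  have : FiniteDimensional ℚ ℚ⟮ζ⟯ := adjoin.finiteDimensional hint
  have hμ' : minpoly ℚ (⟨μ, hμζ⟩ : ℚ⟮ζ⟯) = minpoly ℚ μ := minpoly_eq _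
  have hdeg := minpoly.natDegree_le (A := ℚ) (⟨μ, hμζ⟩ : ℚ⟮ζ⟯)
  rwa [hμ', ← cyclotomic_eq_minpoly_rat hμ hm, natDegree_cyclotomic, adjoin.finrank hint,
    ← cyclotomic_eq_minpoly_rat hζ hn, natDegree_cyclotomic] at hdeg

theorem dvd_cyclotomicTorsionOrder_of_totient_eq {n m : ℕ} (hnm : n ∣ m)
    (h : n.totient = m.totient) : m ∣ cyclotomicTorsionOrder n := by
  unfold cyclotomicTorsionOrder
  split_ifs with hn
  · exact (Even.eq_of_totient_eq_totient hnm (Nat.even_iff.mpr hn) h) ▸ dvd_rfl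
  · rcases Nat.eq_or_eq_of_totient_eq_totient hnm h with rfl | rfl
    · exact dvd_mul_left _ 2
    · exact dvd_rfl

open IntermediateField in
theorem pow_cyclotomicTorsionOrder_eq_one {n : ℕ} {a : ℂ} (ha : a ∈ Rn n)
    (hfin : IsOfFinOrder a) : a ^ cyclotomicTorsionOrder n = 1 := by
  rcases Nat.eq_zero_or_pos n with rfl | hn
  · simp [cyclotomicTorsionOrder]
  have hζ : IsPrimitiveRoot (zeta n) n := Complex.isPrimitiveRoot_exp n hn.ne'
  have hk : 0 < orderOf a := hfin.orderOf_pos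
  have hζmem : zeta n ∈ ℚ⟮zeta n⟯ := mem_adjoin_simple_self ℚ (zeta n)
  have hamem : a ∈ ℚ⟮zeta n⟯ :=
    Subring.closure_le (t := ℚ⟮zeta n⟯.toSubfield.toSubring).mpr (by simp) ha
  -- `ℚ(ζ)` contains a primitive root of unity of order `lcm n (orderOf a)`, of degree `φ(lcm)`.
  have htot : n.totient = (n.lcm (orderOf a)).totient :=
    le_antisymm (Nat.le_of_dvd (Nat.totient_pos.mpr (Nat.lcm_pos hn hk))
        (Nat.totient_dvd_of_dvd (Nat.dvd_lcm_left n _)))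
      (totient_le_of_isPrimitiveRoot_mem_adjoin hn (Nat.lcm_pos hn hk) hζ
        (hζ.pow_mul_pow_lcm (IsPrimitiveRoot.orderOf a) hn.ne' hk.ne')
        (mul_mem (pow_mem hζmem _) (pow_mem hamem _)))
  exact orderOf_dvd_iff_pow_eq_one.mp <| (Nat.dvd_lcm_right n _).trans <|
    dvd_cyclotomicTorsionOrder_of_totient_eq (Nat.dvd_lcm_left n _) htot

def IsORIsometry (g : ℂ → ℂ) : Prop :=
  ∃ a b : ℂ, ‖a‖ = 1 ∧ ∀ z, g z = a * (starRingEnd ℂ) z + b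

theorem isIsometry_iff {g : ℂ → ℂ} : IsIsometry g ↔ IsOPIsometry g ∨ IsORIsometry g := by
  simp only [IsIsometry, IsOPIsometry, IsORIsometry, and_or_left, exists_or]

theorem eq_one_or_eq_neg_one_of_conj_eq {c : ℂ} (hc : (starRingEnd ℂ) c = c) (h : ‖c‖ = 1) :
    c = 1 ∨ c = -1 := by
  obtain ⟨x, rfl⟩ := conj_eq_iff_real.mp hc
  rw [norm_real, Real.norm_eq_abs] at h
  rcases abs_eq zero_le_one |>.mp h with rfl | rfl <;> simp

section Isometry

variable {g h : ℂ → ℂ}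

/- `g 1 - g 0` is the coefficient `a` of `g z = a * z + b` or `g z = a * conj z + b`. -/

namespace IsOPIsometry

theorem apply_eq (hg : IsOPIsometry g) (z : ℂ) : g z = (g 1 - g 0) * z + g 0 := by
  obtain ⟨a, b, -, hg⟩ := hg
  simp only [hg]
  ring

theorem norm_coeff (hg : IsOPIsometry g) : ‖g 1 - g 0‖ = 1 := by
  obtain ⟨a, b, ha, hg⟩ := hg
  simpa [hg] using ha

theorem sub_apply (hg : IsOPIsometry g) (x y : ℂ) : g x - g y = (g 1 - g 0) * (x - y) := by
  rw [hg.apply_eq x, hg.apply_eq y]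
  ring

theorem comp (hg : IsOPIsometry g) (hh : IsOPIsometry h) : IsOPIsometry (g ∘ h) :=
  ⟨(g 1 - g 0) * (h 1 - h 0), g (h 0), by rw [norm_mul, hg.norm_coeff, hh.norm_coeff, one_mul],
    fun z => by
      simp only [Function.comp_apply]
      linear_combination hg.sub_apply (h z) (h 0) + (g 1 - g 0) * hh.sub_apply z 0⟩

end IsOPIsometry

namespace IsORIsometry

theorem apply_eq (hg : IsORIsometry g) (z : ℂ) :
    g z = (g 1 - g 0) * (starRingEnd ℂ) z + g 0 := by
  obtain ⟨a, b, -, hg⟩ := hg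
  simp only [hg, map_one, map_zero]
  ring

theorem norm_coeff (hg : IsORIsometry g) : ‖g 1 - g 0‖ = 1 := by
  obtain ⟨a, b, ha, hg⟩ := hg
  simpa [hg] using ha

theorem sub_apply (hg : IsORIsometry g) (x y : ℂ) :
    g x - g y = (g 1 - g 0) * (starRingEnd ℂ) (x - y) := by
  rw [hg.apply_eq x, hg.apply_eq y, map_sub]
  ring

theorem comp (hg : IsORIsometry g) (hh : IsORIsometry h) : IsOPIsometry (g ∘ h) :=
  ⟨(g 1 - g 0) * (starRingEnd ℂ) (h 1 - h 0), g (h 0),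
    by rw [norm_mul, hg.norm_coeff, norm_conj, hh.norm_coeff, one_mul],
    fun z => by
      have hh' := congrArg (starRingEnd ℂ) (hh.sub_apply z 0)
      rw [map_mul, conj_conj, sub_zero] at hh'
      simp only [Function.comp_apply]
      linear_combination hg.sub_apply (h z) (h 0) + (g 1 - g 0) * hh'⟩

end IsORIsometry

theorem IsOPIsometry.conj_coeff_of_comp_comm {r : ℂ → ℂ} (hg : IsOPIsometry g)
    (hr : IsORIsometry r) (hgr : g ∘ r = r ∘ g) :
    (starRingEnd ℂ) (g 1 - g 0) = g 1 - g 0 := by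
  have h := congrArg (fun f => f 1 - f 0) hgr
  simp only [Function.comp_apply] at h
  rw [hg.sub_apply (r 1) (r 0), hr.sub_apply (g 1) (g 0), mul_comm] at h
  exact (mul_left_cancel₀ (norm_ne_zero_iff.mp (by rw [hr.norm_coeff]; exact one_ne_zero)) h).symm

theorem IsOPIsometry.coeff_pow {g : Equiv.Perm ℂ} (hg : IsOPIsometry g) (m : ℕ) :
    (g ^ m) 1 - (g ^ m) 0 = (g 1 - g 0) ^ m := by
  induction m with
  | zero => simp
  | succ m ih =>
    rw [pow_succ', Equiv.Perm.mul_apply, Equiv.Perm.mul_apply, hg.sub_apply, ih, pow_succ']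

theorem IsOPIsometry.isOfFinOrder_coeff {g : Equiv.Perm ℂ} (hg : IsOPIsometry g)
    (hfin : IsOfFinOrder g) : IsOfFinOrder (g 1 - g 0) := by
  obtain ⟨m, hm, hgm⟩ := isOfFinOrder_iff_pow_eq_one.mp hfin
  exact isOfFinOrder_iff_pow_eq_one.mpr ⟨m, hm, by rw [← hg.coeff_pow, hgm]; simp⟩

theorem Equiv.Perm.eq_one_of_isOfFinOrder_of_apply_eq_add {g : Equiv.Perm ℂ} {b : ℂ}
    (hfin : IsOfFinOrder g) (hg : ∀ z, g z = z + b) : g = 1 := by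
  obtain ⟨m, hm, hgm⟩ := isOfFinOrder_iff_pow_eq_one.mp hfin
  have hpow : ∀ k : ℕ, (g ^ k) 0 = k * b := by
    intro k
    induction k with
    | zero => simp
    | succ k ih => rw [pow_succ', Equiv.Perm.mul_apply, ih, hg]; push_cast; ring
  have hb : b = 0 := by
    have h0 := hpow m
    rw [hgm, Equiv.Perm.one_apply, eq_comm, mul_eq_zero] at h0
    exact h0.resolve_left (Nat.cast_ne_zero.mpr hm.ne')
  ext z
  simp [hg, hb]

end Isometry

section Group

variable {A : Type*} [Group A] [Finite A] {ρ : A →* Equiv.Perm ℂ}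

theorem eq_one_of_coeff_eq_one (hρ : Function.Injective ρ) {a : A}
    (ha : IsOPIsometry (ρ a)) (h1 : ρ a 1 - ρ a 0 = 1) : a = 1 := by
  refine (map_eq_one_iff ρ hρ).mp (Equiv.Perm.eq_one_of_isOfFinOrder_of_apply_eq_add
    (b := ρ a 0) (ρ.isOfFinOrder (isOfFinOrder_of_finite a)) fun z => ?_)
  rw [ha.apply_eq, h1, one_mul]

theorem card_le_of_forall_isOPIsometry (hρ : Function.Injective ρ)
    (hOP : ∀ a, IsOPIsometry (ρ a)) {N : ℕ} (hN : 0 < N)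
    (hroots : ∀ a, (ρ a 1 - ρ a 0) ^ N = 1) : Nat.card A ≤ N := by
  classical
  let χ : A →* ℂ :=
    { toFun a := ρ a 1 - ρ a 0
      map_one' := by simp
      map_mul' a b := by simp only [map_mul, Equiv.Perm.mul_apply]; exact (hOP a).sub_apply _ _ }
  have hχ : Function.Injective χ :=
    (injective_iff_map_eq_one χ).mpr fun a => eq_one_of_coeff_eq_one hρ (hOP a)
  have := Fintype.ofFinite A
  calc Nat.card A = (Finset.univ : Finset A).card := by simp
    _ ≤ (Polynomial.nthRootsFinset N (1 : ℂ)).card :=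
        Finset.card_le_card_of_injOn χ
          (fun a _ => (Polynomial.mem_nthRootsFinset hN 1).mpr (hroots a)) hχ.injOn
    _ = N := (Complex.isPrimitiveRoot_exp N hN.ne').card_nthRootsFinset

end Group

section CommGroup

variable {A : Type*} [CommGroup A] [Finite A] {ρ : A →* Equiv.Perm ℂ}

theorem card_le_four_of_isORIsometry (hρ : Function.Injective ρ)
    (hiso : ∀ a, IsIsometry (ρ a)) {r : A} (hr : IsORIsometry (ρ r)) : Nat.card A ≤ 4 := by
  have hpoint : ∀ a, IsOPIsometry (ρ a) → a ≠ 1 → ρ a 1 - ρ a 0 = -1 := by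
    intro a ha ha1
    have hcomm : ⇑(ρ a) ∘ ⇑(ρ r) = ⇑(ρ r) ∘ ⇑(ρ a) := by
      rw [← Equiv.Perm.coe_mul, ← Equiv.Perm.coe_mul, ← map_mul, ← map_mul, mul_comm]
    exact (eq_one_or_eq_neg_one_of_conj_eq (ha.conj_coeff_of_comp_comm hr hcomm)
      ha.norm_coeff).resolve_left fun h1 => ha1 (eq_one_of_coeff_eq_one hρ ha h1)
  have hinv : ∀ a b, IsOPIsometry (ρ a) → IsOPIsometry (ρ b) → a ≠ 1 → b ≠ 1 → a * b = 1 := by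
    intro a b ha hb ha1 hb1
    have hab : IsOPIsometry (ρ (a * b)) := by rw [map_mul, Equiv.Perm.coe_mul]; exact ha.comp hb
    refine eq_one_of_coeff_eq_one hρ hab ?_
    rw [map_mul, Equiv.Perm.mul_apply, Equiv.Perm.mul_apply, ha.sub_apply, hpoint a ha ha1,
      hpoint b hb hb1]
    norm_num
  obtain ⟨u, hu⟩ : ∃ u, ∀ a, IsOPIsometry (ρ a) → a = 1 ∨ a = u := by
    by_cases h : ∃ u, u ≠ 1 ∧ IsOPIsometry (ρ u)
    · obtain ⟨u, hu1, hu⟩ := h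
      refine ⟨u, fun a ha => or_iff_not_imp_left.mpr fun ha1 => ?_⟩
      rw [mul_eq_one_iff_eq_inv.mp (hinv a u ha hu ha1 hu1),
        ← mul_eq_one_iff_eq_inv.mp (hinv u u hu hu hu1 hu1)]
    · push Not at h
      exact ⟨1, fun a ha => or_iff_not_imp_left.mpr fun ha1 => (h a ha1 ha).elim⟩
  have hsurj : Function.Surjective ![1, u, r⁻¹, r⁻¹ * u] := by
    intro a
    rcases isIsometry_iff.mp (hiso a) with ha | ha
    · rcases hu a ha with rfl | rfl
      exacts [⟨0, rfl⟩, ⟨1, rfl⟩]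
    · have hra : IsOPIsometry (ρ (r * a)) := by
        rw [map_mul, Equiv.Perm.coe_mul]; exact hr.comp ha
      rcases hu (r * a) hra with h | h
      · exact ⟨2, by simp [eq_inv_of_mul_eq_one_right h]⟩
      · exact ⟨3, by simp [← h]⟩
  simpa using Nat.card_le_card_of_surjective _ hsurj

theorem card_le_of_isIsometry (hρ : Function.Injective ρ)
    (hiso : ∀ a, IsIsometry (ρ a)) {N : ℕ} (hN : 4 ≤ N)
    (hroots : ∀ a, IsOPIsometry (ρ a) → (ρ a 1 - ρ a 0) ^ N = 1) : Nat.card A ≤ N := by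
  by_cases hOR : ∃ r, IsORIsometry (ρ r)
  · obtain ⟨r, hr⟩ := hOR
    exact (card_le_four_of_isORIsometry hρ hiso hr).trans hN
  · push Not at hOR
    have hOP a : IsOPIsometry (ρ a) := (isIsometry_iff.mp (hiso a)).resolve_right (hOR a)
    exact card_le_of_forall_isOPIsometry hρ hOP (by omega) fun a => hroots a (hOP a)

end CommGroup

theorem MonoidHom.ker_section_comp_mk'_comp {G H : Type*} [Group G] [Group H] {K : Subgroup H}
    [K.Normal] {s : H ⧸ K →* H} (hs : ∀ x, (s x : H ⧸ K) = x) (f : G →* H) :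
    ((s.comp (QuotientGroup.mk' K)).comp f).ker = K.comap f := by
  ext g
  simp [MonoidHom.mem_ker, map_eq_one_iff s (Function.LeftInverse.injective hs)]

noncomputable def translation (n : ℕ) : Multiplicative (Rn n) →* Equiv.Perm ℂ where
  toFun w := Equiv.addRight (w.toAdd : ℂ)
  map_one' := by ext; simp
  map_mul' _ _ := by ext; simp [add_comm, add_left_comm]

theorem translation_apply {n : ℕ} (w : Multiplicative (Rn n)) (z : ℂ) :
    translation n w z = z + w.toAdd := rfl

theorem isIsometry_translation {n : ℕ} (w : Multiplicative (Rn n)) :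
    IsIsometry (translation n w) :=
  ⟨1, w.toAdd, norm_one, Or.inl fun z => by rw [translation_apply, one_mul]⟩

theorem image_translation {n : ℕ} (w : Multiplicative (Rn n)) :
    translation n w '' (Rn n : Set ℂ) = Rn n := by
  ext z
  refine ⟨?_, fun hz => ⟨z - w.toAdd, sub_mem hz w.toAdd.2, sub_add_cancel _ _⟩⟩
  rintro ⟨x, hx, rfl⟩
  exact add_mem hx w.toAdd.2

theorem isColourSym_translation {n : ℕ} (I : Ideal (Rn n)) (w : Multiplicative (Rn n)) :
    IsColourSym n I (translation n w) := by
  intro x y _ _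
  rw [translation_apply, translation_apply, add_sub_add_right_eq_sub]

theorem inIdeal_coe_iff {n : ℕ} {I : Ideal (Rn n)} {w : Rn n} : InIdeal n I w ↔ w ∈ I :=
  ⟨fun ⟨_, hv, hvw⟩ => Subtype.ext hvw ▸ hv, fun hw => ⟨w, hw, rfl⟩⟩

theorem stmt8_general (n : ℕ) (hn : 3 ≤ n) (I : Ideal ↥(Rn n))
    (hcard : (if n % 2 = 0 then n else 2 * n) < Nat.card (↥(Rn n) ⧸ I))
    (H : Subgroup (Equiv.Perm ℂ))
    (hH : ∀ g : Equiv.Perm ℂ, g ∈ H ↔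
      (IsIsometry ⇑g ∧ ⇑g '' (Rn n : Set ℂ) = (Rn n : Set ℂ) ∧ IsColourSym n I ⇑g))
    (K : Subgroup ↥H)
    (hK : ∀ g : ↥H, g ∈ K ↔ ∀ x ∈ (Rn n : Set ℂ), InIdeal n I ((g : Equiv.Perm ℂ) x - x))
    [hKn : K.Normal] :
    ¬ ∃ s : (↥H ⧸ K) →* ↥H, ∀ x : ↥H ⧸ K, (QuotientGroup.mk (s x) : ↥H ⧸ K) = x := by
  rintro ⟨s, hs⟩
  let τ : Multiplicative (Rn n) →* H := (translation n).codRestrict H fun w =>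
    (hH _).mpr ⟨isIsometry_translation w, image_translation w, isColourSym_translation I w⟩
  let ψ := (s.comp (QuotientGroup.mk' K)).comp τ
  have hker : ψ.ker = I.toAddSubgroup.toSubgroup := by
    rw [MonoidHom.ker_section_comp_mk'_comp hs]
    ext w
    simp only [Subgroup.mem_comap, MonoidHom.codRestrict_apply, hK, SetLike.mem_coe,
      translation_apply, add_sub_cancel_left, inIdeal_coe_iff, Multiplicative.mem_toSubgroup,
      AddSubgroup.mem_mk, Submodule.mem_toAddSubmonoid, τ]
    exact ⟨fun h => h 0 (Rn n).zero_mem, fun h _ _ => h⟩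
  have hcardA : Nat.card (Multiplicative (Rn n) ⧸ ψ.ker) = Nat.card (Rn n ⧸ I) := by
    rw [hker]
    exact AddSubgroup.index_toSubgroup _
  have : Finite (Multiplicative (Rn n) ⧸ ψ.ker) := Nat.finite_of_card_ne_zero (by omega)
  let ρ := H.subtype.comp (QuotientGroup.kerLift ψ)
  have hρH a : IsIsometry (ρ a) ∧ ρ a '' (Rn n : Set ℂ) = Rn n ∧ IsColourSym n I (ρ a) :=
    (hH _).mp (QuotientGroup.kerLift ψ a).2
  have hmem a z (hz : z ∈ Rn n) : ρ a z ∈ Rn n := (hρH a).2.1.subset ⟨z, hz, rfl⟩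
  have hle := card_le_of_isIsometry (H.subtype_injective.comp (QuotientGroup.kerLift_injective ψ))
    (fun a => (hρH a).1) (by unfold cyclotomicTorsionOrder; split_ifs <;> omega) fun a ha =>
      pow_cyclotomicTorsionOrder_eq_one
        (sub_mem (hmem a 1 (Rn n).one_mem) (hmem a 0 (Rn n).zero_mem))
        (ha.isOfFinOrder_coeff (ρ.isOfFinOrder (isOfFinOrder_of_finite a)))
  rw [hcardA] at hle
  exact hcard.not_ge hle

/-- if the number of colours `ℓ = card(R/I)` is finite and exceeds `N`
(`N = n` for `n` even, `N = 2n` for `n` odd), then `1 → K → H → H/K → 1` does not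
split, i.e. `H ≠ K ⋊ H/K`. -/
theorem stmt8 (n : ℕ) (hn : 3 ≤ n) (hn2 : n % 4 ≠ 2) (I : Ideal ↥(Rn n))
    (hfin : Nat.card (↥(Rn n) ⧸ I) ≠ 0)
    (hcard : (if n % 2 = 0 then n else 2 * n) < Nat.card (↥(Rn n) ⧸ I))
    (H : Subgroup (Equiv.Perm ℂ))
    (hH : ∀ g : Equiv.Perm ℂ, g ∈ H ↔
      (IsIsometry ⇑g ∧ ⇑g '' (Rn n : Set ℂ) = (Rn n : Set ℂ) ∧ IsColourSym n I ⇑g))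
    (K : Subgroup ↥H)
    (hK : ∀ g : ↥H, g ∈ K ↔ ∀ x ∈ (Rn n : Set ℂ), InIdeal n I ((g : Equiv.Perm ℂ) x - x))
    [hKn : K.Normal] :
    ¬ ∃ s : (↥H ⧸ K) →* ↥H, ∀ x : ↥H ⧸ K, (QuotientGroup.mk (s x) : ↥H ⧸ K) = x :=
  stmt8_general n hn I hcard H hH K hK (hKn := hKn)
end

section
/- Suppose n ∈ {3,4,5,7,8,9,11,12,13,15,16,17,19,20,21,24,25,27,28,32,33,35,36,40,44,45,48,60,84} (the class number one values). Let φ denote Euler's totient function, and let I be an ideal of R with card(R/I) = 2^{φ(n)} and I ≠ 2R. Then every isometry g of the complex plane with g(R) = R satisfying g(x) − x ∈ I for all x ∈ R is a translation by an element of I: there exists t ∈ I such that g(z) = z + t for all z ∈ ℂ. That is, the colour preserving group K equals T_I. -/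
/-!
Write `g z = a z + c` or `g z = a z̄ + c`. Evaluating the hypothesis at `0` and `1` gives `c ∈ I`
and `a ∈ R` with `a ≡ 1 (mod I)`. Since `ℚ(ζ)` is a CM field (`n > 2`), complex conjugation
commutes with every complex embedding, so `|a| = 1` forces all conjugates of `a` to have
absolute value `1`, and `a` is a root of unity by Kronecker.

A root of unity `u ≠ 1` with `u ≡ 1 (mod I)` cannot exist: `R/I` has order `2^φ(n)`, so
`2^φ(n) ∈ I`. If `u` has odd order `m`, then `m = ∑ (1 - u^j) ∈ I` is coprime to `2^φ(n)`,
so `I = R`. If `u` has even order, then `u^(m/2) = -1` gives `2 ∈ I`; as `R` is free of rank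
`φ(n)` over `ℤ`, `|R/2R| = 2^φ(n)`, and so `I = 2R`. Hence `a = 1` for a rotation, while for a
reflection `g(ζ) - ζ ∈ I` yields `ζ² ≡ 1`, hence `ζ² = 1`, which is absurd for `n > 2`.
-/

open Complex

namespace Ideal

variable {R : Type*} [CommRing R]

theorem natCast_natCard_quotient_mem (I : Ideal R) : (Nat.card (R ⧸ I) : R) ∈ I := by
  rw [← Quotient.eq_zero_iff_mem, map_natCast, ← nsmul_one]
  exact card_nsmul_eq_zero'

theorem eq_of_le_of_natCard_quotient_le {I J : Ideal R} [Finite (R ⧸ J)] (hJI : J ≤ I)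
    (hcard : Nat.card (R ⧸ J) ≤ Nat.card (R ⧸ I)) : I = J := by
  by_contra hne
  have hlt : J.toAddSubgroup < I.toAddSubgroup :=
    lt_of_le_of_ne hJI fun h => hne (Submodule.toAddSubgroup_injective h).symm
  have : Finite (R ⧸ J.toAddSubgroup) := ‹Finite (R ⧸ J)›
  have : J.toAddSubgroup.FiniteIndex := AddSubgroup.finiteIndex_of_finite_quotient
  exact (AddSubgroup.index_strictAnti hlt).not_ge hcard

section FreeOverInt

variable {S : Type*} [CommRing S] [Module.Free ℤ S] [Module.Finite ℤ S]

theorem natCard_quotient_span_natCast (m : ℕ) [NeZero m] :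
    Nat.card (S ⧸ span {(m : S)}) = m ^ Module.finrank ℤ S := by
  have h : (span {(m : S)}).restrictScalars ℤ = LinearMap.range (LinearMap.lsmul ℤ S m) := by
    ext x
    simp [mem_span_singleton', eq_comm, mul_comm]
  rw [← ModN.natCard_eq S m,
    ← Nat.card_congr (Submodule.Quotient.restrictScalarsEquiv ℤ _).toEquiv, h]

theorem eq_span_natCast_of_natCast_mem {m : ℕ} [NeZero m] {I : Ideal S}
    (hcard : Nat.card (S ⧸ I) = m ^ Module.finrank ℤ S) (hm : (m : S) ∈ I) :
    I = span {(m : S)} := by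
  have : Finite (S ⧸ span {(m : S)}) := Nat.finite_of_card_ne_zero <| by
    rw [natCard_quotient_span_natCast]
    exact pow_ne_zero _ (NeZero.ne m)
  exact eq_of_le_of_natCard_quotient_le ((span_singleton_le_iff_mem I).2 hm)
    (by rw [natCard_quotient_span_natCast, hcard])

end FreeOverInt

variable [IsDomain R] {I : Ideal R}

theorem natCast_mem_of_pow_eq_one_of_sub_one_mem {v : R} {p : ℕ} (hv : v ^ p = 1) (hv1 : v ≠ 1)
    (hvI : v - 1 ∈ I) : (p : R) ∈ I := by
  have hsum : ∑ j ∈ Finset.range p, v ^ j = 0 := by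
    have h := geom_sum_mul v p
    rw [hv, sub_self] at h
    exact (mul_eq_zero.1 h).resolve_right (sub_ne_zero.2 hv1)
  have hp : (p : R) = -∑ j ∈ Finset.range p, (v ^ j - 1) := by
    simp [Finset.sum_sub_distrib, hsum]
  rw [hp]
  refine I.neg_mem (I.sum_mem fun j _ => ?_)
  simpa using I.mem_of_dvd (sub_dvd_pow_sub_pow v 1 j) hvI

theorem eq_one_of_isOfFinOrder_of_sub_one_mem {k : ℕ} (h2k : (2 : R) ^ k ∈ I)
    (h2 : (2 : R) ∉ I) {u : R} (hu : IsOfFinOrder u) (huI : u - 1 ∈ I) : u = 1 := by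
  by_contra hu1
  have hpos := hu.orderOf_pos
  rcases Nat.even_or_odd' (orderOf u) with ⟨l, hl | hl⟩
  · have hsq : (u ^ l) ^ 2 = 1 := by rw [← pow_mul, mul_comm, ← hl, pow_orderOf_eq_one]
    have hl1 : u ^ l ≠ 1 := pow_ne_one_of_lt_orderOf (by omega) (by omega)
    have hlI : u ^ l - 1 ∈ I := I.mem_of_dvd (by simpa using sub_dvd_pow_sub_pow u 1 l) huI
    exact h2 (by exact_mod_cast natCast_mem_of_pow_eq_one_of_sub_one_mem hsq hl1 hlI)
  · have hmI := natCast_mem_of_pow_eq_one_of_sub_one_mem (pow_orderOf_eq_one u) hu1 huI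
    have hcop : (orderOf u).Coprime (2 ^ k) := (Odd.coprime_two_right ⟨l, hl⟩).pow_right k
    obtain ⟨a, b, hab⟩ := hcop.isCoprime.intCast (R := R)
    have h1 : (1 : R) ∈ I := by
      rw [← hab]
      push_cast
      exact I.add_mem (I.mul_mem_left _ hmI) (I.mul_mem_left _ h2k)
    exact h2 (by simp [(eq_top_iff_one I).2 h1])

end Ideal

open scoped ComplexConjugate

open NumberField in
theorem NumberField.IsCMField.isOfFinOrder_of_norm_eq_one {K : Type*} [Field K] [NumberField K]
    [IsCMField K] {x : K} (hx : IsIntegral ℤ x) (φ : K →+* ℂ) (h : ‖φ x‖ = 1) :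
    IsOfFinOrder x := by
  have hconj : x * IsCMField.complexConj K x = 1 := φ.injective <| by
    rw [map_mul, IsCMField.complexEmbedding_complexConj, mul_conj', h, map_one]
    norm_num
  refine isOfFinOrder_iff_pow_eq_one.2 <|
    (Embeddings.pow_eq_one_of_norm_eq_one K ℂ hx fun ψ => ?_).imp
      fun k ⟨hk, hxk⟩ => ⟨hk, hxk⟩
  have : ((‖ψ x‖ ^ 2 : ℝ) : ℂ) = 1 := by
    rw [ofReal_pow, ← mul_conj', ← IsCMField.complexEmbedding_complexConj, ← map_mul, hconj,
      map_one]
  exact (pow_eq_one_iff_of_nonneg (norm_nonneg _) two_ne_zero).1 (by exact_mod_cast this)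

variable {n : ℕ}

@[simp]
theorem coe_zetaR : (zetaR n : ℂ) = zeta n := rfl

theorem isPrimitiveRoot_zeta (hn : n ≠ 0) : IsPrimitiveRoot (zeta n) n :=
  isPrimitiveRoot_exp n hn

theorem isPrimitiveRoot_zetaR (hn : n ≠ 0) : IsPrimitiveRoot (zetaR n) n :=
  (isPrimitiveRoot_zeta hn).of_map_of_injective (f := (Rn n).subtype) Subtype.val_injective

theorem zeta_mul_conj (hn : n ≠ 0) : zeta n * conj (zeta n) = 1 := by
  rw [mul_conj', norm_eq_one_of_pow_eq_one (isPrimitiveRoot_zeta hn).pow_eq_one hn]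
  simp

theorem Rn.le_integralClosure (hn : n ≠ 0) : Rn n ≤ (integralClosure ℤ ℂ).toSubring :=
  Subring.closure_le.2 <| Set.singleton_subset_iff.2 <|
    (isPrimitiveRoot_zeta hn).isIntegral (Nat.pos_of_ne_zero hn)

noncomputable def Rn.basis (hn : n ≠ 0) : Module.Basis (Fin n.totient) ℤ (Rn n) :=
  let hint := (isPrimitiveRoot_zeta hn).isIntegral (Nat.pos_of_ne_zero hn)
  ((Algebra.adjoin.powerBasis' hint).basis.map
    (Subring.closureEquivAdjoinInt _).symm.toLinearEquiv).reindex <| finCongr <| by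
      rw [Algebra.adjoin.powerBasis'_dim, ← Polynomial.cyclotomic_eq_minpoly
        (isPrimitiveRoot_zeta hn) (Nat.pos_of_ne_zero hn), Polynomial.natDegree_cyclotomic]

open IntermediateField in
theorem Rn.isOfFinOrder_of_norm_eq_one (hn : 2 < n) {x : Rn n} (hx : ‖(x : ℂ)‖ = 1) :
    IsOfFinOrder x := by
  have : NeZero n := ⟨by omega⟩
  let K := ℚ⟮zeta n⟯
  have : IsCyclotomicExtension {n} ℚ K := by
    change IsCyclotomicExtension {n} ℚ K.toSubalgebra
    rw [adjoin_simple_toSubalgebra_of_isAlgebraic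
      ((isPrimitiveRoot_zeta (NeZero.ne n)).isIntegral (NeZero.pos n)).tower_top.isAlgebraic]
    exact (isPrimitiveRoot_zeta (NeZero.ne n)).adjoin_isCyclotomicExtension ℚ
  have : NumberField K := IsCyclotomicExtension.numberField {n} ℚ K
  have : NumberField.IsCMField K :=
    IsCyclotomicExtension.Rat.isCMField K ⟨n, Set.mem_singleton n, hn⟩
  have hxK : (x : ℂ) ∈ K := Subring.closure_le (t := K.toSubalgebra.toSubring)
    |>.2 (Set.singleton_subset_iff.2 (mem_adjoin_simple_self ℚ (zeta n))) x.2
  have hint : IsIntegral ℤ (⟨x, hxK⟩ : K) :=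
    (isIntegral_algebraMap_iff (algebraMap K ℂ).injective).1
      (Rn.le_integralClosure (NeZero.ne n) x.2)
  exact (Subtype.val_injective.isOfFinOrder_iff (f := (Rn n).subtype.toMonoidHom)).1 <|
    (algebraMap K ℂ).toMonoidHom.isOfFinOrder <|
      NumberField.IsCMField.isOfFinOrder_of_norm_eq_one hint (algebraMap K ℂ) hx

theorem Rn.eq_one_of_isOfFinOrder_of_sub_one_mem (hn : n ≠ 0) {I : Ideal (Rn n)}
    (hcard : Nat.card (Rn n ⧸ I) = 2 ^ n.totient) (hne : I ≠ Ideal.span {2}) {u : Rn n}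
    (hu : IsOfFinOrder u) (huI : u - 1 ∈ I) : u = 1 := by
  let B := Rn.basis hn
  have : Module.Free ℤ (Rn n) := .of_basis B
  have : Module.Finite ℤ (Rn n) := .of_basis B
  refine Ideal.eq_one_of_isOfFinOrder_of_sub_one_mem (k := n.totient)
    (by simpa [hcard] using I.natCast_natCard_quotient_mem) (fun h2 => hne ?_) hu huI
  simpa using Ideal.eq_span_natCast_of_natCast_mem (m := 2)
    (by rw [hcard, Module.finrank_eq_card_basis B, Fintype.card_fin]) (by simpa using h2)

section ColourPreserving

variable {I : Ideal (Rn n)} {g : ℂ → ℂ} {a c : ℂ}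

theorem exists_coe_eq_and_sub_one_mem (σ : ℂ →+* ℂ) (hg : ∀ z, g z = a * σ z + c)
    (hgI : ∀ x ∈ (Rn n : Set ℂ), InIdeal n I (g x - x)) :
    InIdeal n I c ∧ ∃ α : Rn n, (α : ℂ) = a ∧ α - 1 ∈ I := by
  obtain ⟨β, hβI, hβ⟩ := hgI 0 (zero_mem _)
  obtain ⟨γ, hγI, hγ⟩ := hgI 1 (one_mem _)
  refine ⟨⟨β, hβI, by simp [hβ, hg]⟩, γ - β + 1, ?_, by simpa using I.sub_mem hγI hβI⟩
  push_cast
  rw [hγ, hβ, hg, hg, map_one, map_zero]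
  ring

theorem zetaR_sq_sub_one_mem (hn : n ≠ 0) (hg : ∀ z, g z = a * conj z + c)
    (hgI : ∀ x ∈ (Rn n : Set ℂ), InIdeal n I (g x - x)) : zetaR n ^ 2 - 1 ∈ I := by
  obtain ⟨⟨β, hβI, hβ⟩, α, hα, hαI⟩ := exists_coe_eq_and_sub_one_mem _ hg hgI
  obtain ⟨δ, hδI, hδ⟩ := hgI (zeta n) (zetaR n).2
  have hζ2 : zetaR n ^ 2 - 1 = (α - 1) - zetaR n * (δ - β) := by
    apply Subtype.ext
    push_cast
    rw [hα, hδ, hβ, coe_zetaR, hg]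
    linear_combination a * zeta_mul_conj hn
  exact hζ2 ▸ I.sub_mem hαI (I.mul_mem_left _ (I.sub_mem hδI hβI))

end ColourPreserving

/-- for the class number one values of `n`, if `card(R/I) = 2^{φ(n)}` but
`I ≠ 2R`, then every colour preserving isometry is a translation by an element of `I`,
i.e. `K = T_I`. -/
theorem stmt14 (n : ℕ)
    (hn : n ∈ ({3, 4, 5, 7, 8, 9, 11, 12, 13, 15, 16, 17, 19, 20, 21, 24, 25, 27, 28,
      32, 33, 35, 36, 40, 44, 45, 48, 60, 84} : Set ℕ))
    (I : Ideal ↥(Rn n))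
    (hcard : Nat.card (↥(Rn n) ⧸ I) = 2 ^ n.totient)
    (hne : I ≠ Ideal.span {(2 : ↥(Rn n))}) :
    ∀ g : ℂ → ℂ, IsIsometry g → g '' (Rn n : Set ℂ) = (Rn n : Set ℂ) →
      (∀ x ∈ (Rn n : Set ℂ), InIdeal n I (g x - x)) →
      ∃ t : ℂ, InIdeal n I t ∧ ∀ z : ℂ, g z = z + t := by
  have hn2 : 2 < n := by
    simp only [Set.mem_insert_iff, Set.mem_singleton_iff] at hn
    omega
  have key := fun {u : Rn n} =>
    Rn.eq_one_of_isOfFinOrder_of_sub_one_mem (by omega) hcard hne (u := u)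
  rintro g ⟨a, c, ha, hg | hg⟩ - hgI
  · obtain ⟨hc, α, rfl, hαI⟩ := exists_coe_eq_and_sub_one_mem (RingHom.id ℂ) hg hgI
    obtain rfl := key (Rn.isOfFinOrder_of_norm_eq_one hn2 ha) hαI
    exact ⟨c, hc, fun z => by simp [hg]⟩
  · have hζ := isPrimitiveRoot_zetaR (n := n) (by omega)
    have hζ2 := key (hζ.isOfFinOrder (by omega)).pow (zetaR_sq_sub_one_mem (by omega) hg hgI)
    have := Nat.le_of_dvd two_pos (hζ.dvd_of_pow_eq_one 2 hζ2)
    omega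
end
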